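/- For every n ≥ 2 and all nonnegative integers k_1,…,k_n: ζ_FKMT(−k_1,…,−k_n) = Σ_{i_2+j_2=k_2} ⋯ Σ_{i_n+j_n=k_n} [∏_{a=2}^n C(k_a,i_a)] · ζ_FKMT(−i_2,…,−i_n) · ζ_FKMT(−(k_1+j_2+⋯+j_n)), where C(k,i) denotes the binomial coefficient k!/(i!(k−i)!). -/

import Mathlib

/-- Desingularized multiple zeta value `ζ_FKMT(−k_1,…,−k_n)`. -/
noncomputable def zetaFKMT {n : ℕ} (k : Fin n → ℕ) : ℚ :=
  (-1 : ℚ) ^ (∑ i, k i) *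
    ∑ᶠ ν ∈ {ν : Fin n → Fin n → ℕ |
        (∀ i j : Fin n, j < i → ν i j = 0) ∧ ∀ j : Fin n, (∑ i, ν i j) = k j},
      ∏ i : Fin n,
        (((k i).factorial : ℚ) / ∏ j : Fin n, ((ν i j).factorial : ℚ)) *
          bernoulli ((∑ j, ν i j) + 1)

/-!
An upper triangular array `ν` with column sums `k` is its first row bordering an upper
triangular block `ν'`. Since `ν` is upper triangular, the first row is
`(k₁, j₂, …, jₙ)` with `j_a = k_a - i_a`, where `i` are the column sums of `ν'`, so the
sum over `ν` becomes a sum over `i` and over arrays `ν'` with column sums `i`. In the summand, the first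
row contributes `B_{k₁ + j₂ + ⋯ + jₙ + 1} / (j₂! ⋯ jₙ!)`, and writing
`k_a! = C(k_a, i_a) i_a! j_a!` turns the remaining rows into `∏ C(k_a, i_a)` times the
summand of `ζ_FKMT(-i₂, …, -iₙ)`.
-/

def upperTriArrays {n : ℕ} (k : Fin n → ℕ) : Finset (Fin n → Fin n → ℕ) :=
  (Fintype.piFinset fun _ => Fintype.piFinset fun j => Finset.range (k j + 1)).filter
    fun ν => (∀ i j : Fin n, j < i → ν i j = 0) ∧ ∀ j : Fin n, (∑ i, ν i j) = k j

lemma mem_upperTriArrays {n : ℕ} {k : Fin n → ℕ} {ν : Fin n → Fin n → ℕ} :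
    ν ∈ upperTriArrays k ↔
      (∀ i j : Fin n, j < i → ν i j = 0) ∧ ∀ j, (∑ i, ν i j) = k j := by
  refine Finset.mem_filter.trans (and_iff_right_of_imp fun h => ?_)
  refine Fintype.mem_piFinset.2 fun i => Fintype.mem_piFinset.2 fun j => ?_
  rw [Finset.mem_range, Nat.lt_succ_iff, ← h.2 j]
  exact Finset.single_le_sum (f := fun a => ν a j) (fun _ _ => Nat.zero_le _)
    (Finset.mem_univ i)

lemma mem_piFinset_range_succ {n : ℕ} {u i : Fin n → ℕ} :
    i ∈ Fintype.piFinset (fun b => Finset.range (u b + 1)) ↔ ∀ b, i b ≤ u b := by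
  simp

def fkmtSummand {n : ℕ} (k : Fin n → ℕ) (ν : Fin n → Fin n → ℕ) : ℚ :=
  ∏ i, ((k i).factorial / ∏ j, ((ν i j).factorial : ℚ)) * bernoulli ((∑ j, ν i j) + 1)

lemma zetaFKMT_eq_sum {n : ℕ} (k : Fin n → ℕ) :
    zetaFKMT k = (-1 : ℚ) ^ (∑ i, k i) * ∑ ν ∈ upperTriArrays k, fkmtSummand k ν := by
  rw [zetaFKMT, ← finsum_mem_coe_finset]
  congr 1
  rw [← finsum_mem_coe_finset]
  congr 1
  ext ν
  simp [mem_upperTriArrays, fkmtSummand]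

lemma zetaFKMT_fin_one (K : ℕ) :
    zetaFKMT (fun _ : Fin 1 => K) = (-1 : ℚ) ^ K * bernoulli (K + 1) := by
  have h : upperTriArrays (fun _ : Fin 1 => K) = {fun _ _ => K} := by
    ext ν
    simp only [mem_upperTriArrays, Finset.mem_singleton, Fin.sum_univ_one]
    refine ⟨fun h => ?_, fun h => ⟨fun i j hji => by omega, fun j => by simp [h]⟩⟩
    funext i j
    rw [Subsingleton.elim i 0]
    exact h.2 j
  simp [zetaFKMT_eq_sum, h, fkmtSummand, Nat.factorial_ne_zero]

def borderArray {n : ℕ} (x : ℕ) (r : Fin n → ℕ) (ν : Fin n → Fin n → ℕ) :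
    Fin (n + 1) → Fin (n + 1) → ℕ :=
  Fin.cons (Fin.cons x r) fun a => Fin.cons 0 (ν a)

def colSumsBelow {n : ℕ} (ν : Fin (n + 1) → Fin (n + 1) → ℕ) (b : Fin n) : ℕ :=
  ∑ a : Fin n, ν a.succ b.succ

section Decomposition

variable {n : ℕ} {k : Fin (n + 1) → ℕ}

lemma borderArray_mem_upperTriArrays {i : Fin n → ℕ} {ν : Fin n → Fin n → ℕ}
    (hi : ∀ b, i b ≤ k b.succ) (hν : ν ∈ upperTriArrays i) :
    borderArray (k 0) (fun b => k b.succ - i b) ν ∈ upperTriArrays k := by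
  obtain ⟨htri, hcol⟩ := mem_upperTriArrays.1 hν
  refine mem_upperTriArrays.2 ⟨fun a b hba => ?_, fun b => ?_⟩
  · cases a using Fin.cases with
    | zero => exact absurd hba (Fin.not_lt_zero b)
    | succ a =>
      cases b using Fin.cases with
      | zero => rfl
      | succ b => exact htri a b (Fin.succ_lt_succ_iff.1 hba)
  · cases b using Fin.cases with
    | zero => simp [borderArray, Fin.sum_univ_succ]
    | succ b => simp [borderArray, Fin.sum_univ_succ, hcol b, Nat.sub_add_cancel (hi b)]

variable {ν : Fin (n + 1) → Fin (n + 1) → ℕ} (hν : ν ∈ upperTriArrays k)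
include hν

lemma colSumsBelow_add_eq (b : Fin n) : ν 0 b.succ + colSumsBelow ν b = k b.succ := by
  rw [← (mem_upperTriArrays.1 hν).2 b.succ, Fin.sum_univ_succ, colSumsBelow]

lemma lowerBlock_mem_upperTriArrays :
    (fun a b : Fin n => ν a.succ b.succ) ∈ upperTriArrays (colSumsBelow ν) :=
  mem_upperTriArrays.2
    ⟨fun _ _ hba => (mem_upperTriArrays.1 hν).1 _ _ (Fin.succ_lt_succ_iff.2 hba), fun _ => rfl⟩

lemma eq_borderArray : ν = borderArray (k 0) (fun b => k b.succ - colSumsBelow ν b)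
    (fun a b => ν a.succ b.succ) := by
  obtain ⟨htri, hcol⟩ := mem_upperTriArrays.1 hν
  have hcol0 : ν 0 0 = k 0 := by
    simpa [Fin.sum_univ_succ, htri _ 0 (Fin.succ_pos _)] using hcol 0
  funext a b
  cases a using Fin.cases with
  | zero =>
    cases b using Fin.cases with
    | zero => simpa [borderArray] using hcol0
    | succ b => simp [borderArray, ← colSumsBelow_add_eq hν b]
  | succ a =>
    cases b using Fin.cases with
    | zero => simpa [borderArray] using htri _ 0 (Fin.succ_pos _)
    | succ b => rfl

end Decomposition

lemma sum_upperTriArrays_succ {n : ℕ} (k : Fin (n + 1) → ℕ)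
    (f : (Fin (n + 1) → Fin (n + 1) → ℕ) → ℚ) :
    ∑ ν ∈ upperTriArrays k, f ν =
      ∑ i ∈ Fintype.piFinset (fun b : Fin n => Finset.range (k b.succ + 1)),
        ∑ ν ∈ upperTriArrays i, f (borderArray (k 0) (fun b => k b.succ - i b) ν) := by
  rw [Finset.sum_sigma']
  refine Finset.sum_nbij' (fun ν => ⟨colSumsBelow ν, fun a b => ν a.succ b.succ⟩)
    (fun p => borderArray (k 0) (fun b => k b.succ - p.1 b) p.2)
    (fun ν hν => ?_) (fun p hp => ?_) (fun ν hν => (eq_borderArray hν).symm) (fun p hp => ?_)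
    (fun ν hν => congrArg f (eq_borderArray hν))
  · refine Finset.mem_sigma.2 ⟨mem_piFinset_range_succ.2 fun b => ?_,
      lowerBlock_mem_upperTriArrays hν⟩
    exact (Nat.le_add_left _ _).trans_eq (colSumsBelow_add_eq hν b)
  · obtain ⟨hi, hp⟩ := Finset.mem_sigma.1 hp
    exact borderArray_mem_upperTriArrays (mem_piFinset_range_succ.1 hi) hp
  · obtain ⟨i, ν⟩ := p
    have hcol := (mem_upperTriArrays.1 (Finset.mem_sigma.1 hp).2).2
    refine Sigma.ext (funext fun b => ?_) HEq.rfl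
    simpa [colSumsBelow, borderArray] using hcol b

lemma fkmtSummand_borderArray {n : ℕ} (k : Fin (n + 1) → ℕ) {i : Fin n → ℕ}
    (hi : ∀ b, i b ≤ k b.succ) (ν : Fin n → Fin n → ℕ) :
    fkmtSummand k (borderArray (k 0) (fun b => k b.succ - i b) ν) =
      (∏ b, ((k b.succ).choose (i b) : ℚ)) * fkmtSummand i ν *
        bernoulli (k 0 + ∑ b, (k b.succ - i b) + 1) := by
  have hfac (b : Fin n) : ((k b.succ).factorial : ℚ) =
      (k b.succ).choose (i b) * (i b).factorial * (k b.succ - i b).factorial := by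
    exact_mod_cast (Nat.choose_mul_factorial_mul_factorial (hi b)).symm
  simp only [fkmtSummand, borderArray, Fin.prod_univ_succ, Fin.cons_zero, Fin.cons_succ,
    Fin.sum_cons, Nat.factorial_zero, Nat.cast_one, one_mul, zero_add, hfac]
  simp only [mul_div_assoc, mul_assoc, Finset.prod_mul_distrib, Finset.prod_div_distrib]
  field_simp

lemma sum_eq_add_sum_tsub {n : ℕ} (k : Fin (n + 1) → ℕ) {i : Fin n → ℕ}
    (hi : ∀ b, i b ≤ k b.succ) :
    ∑ a, k a = ∑ b, i b + (k 0 + ∑ b, (k b.succ - i b)) := by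
  rw [Fin.sum_univ_succ, add_left_comm, ← Finset.sum_add_distrib]
  congr 2
  funext b
  exact (Nat.add_sub_cancel' (hi b)).symm

/-- The tuple `(i_2,…,i_n)` is encoded as `i : Fin (m+1) → ℕ` with `i a ≤ k_{a+1}`,
and `j_a = k_a − i_a`. -/
theorem zetaFKMT_recurrence (m : ℕ) (k : Fin (m + 2) → ℕ) :
    zetaFKMT k =
      ∑ i ∈ Fintype.piFinset (fun a : Fin (m + 1) => Finset.range (k a.succ + 1)),
        (∏ a : Fin (m + 1), ((k a.succ).choose (i a) : ℚ)) *
          zetaFKMT (fun a : Fin (m + 1) => i a) *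
          zetaFKMT (fun _ : Fin 1 => k 0 + ∑ a : Fin (m + 1), (k a.succ - i a)) := by
  rw [zetaFKMT_eq_sum, sum_upperTriArrays_succ, Finset.mul_sum]
  refine Finset.sum_congr rfl fun i hi => ?_
  have hik := mem_piFinset_range_succ.1 hi
  simp only [zetaFKMT_fin_one]
  simp only [zetaFKMT_eq_sum, fkmtSummand_borderArray k hik, sum_eq_add_sum_tsub k hik,
    Finset.mul_sum, Finset.sum_mul, pow_add]
  exact Finset.sum_congr rfl fun ν _ => by ring
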